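/- Let ρ be a polymatroid on E, let A ⊆ E, and define R_ρ(A) as the set of cyclic flats B of ρ with ρ(A) = ρ(B) + Σ_{i ∈ A \ B} ρ({i}). Then every B ∈ R_ρ(A) satisfies cl_ρ(cy_ρ(A)) ⊆ B ⊆ cy_ρ(cl_ρ(A)). -/

import Mathlib

open Finset
open scoped Classical

variable {α : Type*}

def IsPolymatroid [DecidableEq α] (ρ : Finset α → ℝ) : Prop :=
  ρ ∅ = 0 ∧ (∀ A B : Finset α, A ⊆ B → ρ A ≤ ρ B) ∧
    (∀ A B : Finset α, ρ (A ∪ B) + ρ (A ∩ B) ≤ ρ A + ρ B)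

/-- `A` is a flat of the polymatroid `ρ` (ground set = all of `α`). -/
def PmFlat [DecidableEq α] (ρ : Finset α → ℝ) (A : Finset α) : Prop :=
  ∀ i : α, i ∉ A → ρ A < ρ (insert i A)

/-- `A` is a cyclic set of the polymatroid `ρ`. -/
def PmCyclic [DecidableEq α] (ρ : Finset α → ℝ) (A : Finset α) : Prop :=
  ∀ i ∈ A, 0 < ρ {i} → ρ A < ρ (A.erase i) + ρ {i}

/-- The closure of `A`: the set `{i : ρ(A ∪ {i}) = ρ(A)}`. -/
noncomputable def pmCl [DecidableEq α] [Fintype α] (ρ : Finset α → ℝ) (A : Finset α) :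
    Finset α :=
  Finset.univ.filter (fun i => ρ (insert i A) = ρ A)

/-- The maximum cyclic subset of `A`: the union of all cyclic subsets of `A`. -/
noncomputable def pmCy [DecidableEq α] (ρ : Finset α → ℝ) (A : Finset α) : Finset α :=
  (A.powerset.filter (fun D => PmCyclic ρ D)).sup id

/-!
Write `Δ_X(i) = ρ(X ∪ {i}) - ρ(X)`; submodularity says exactly that `Δ_X(i)` is antitone in `X`.
Subadditivity turns the defining equation of `R_ρ(A)` into `ρ(A ∪ B) = ρ(A)`, which puts `B` inside
`cl(A)` and hence, being cyclic, inside `cy(cl(A))`. It also makes `ρ` modular on top of `B` along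
every subset of `A \ B`, so a cyclic `D ⊆ A` with an element `i ∉ B` would have
`Δ_{D - i}(i) < ρ{i} = Δ_{B ∪ (D - i)}(i)`, against antitonicity; hence `cy(A) ⊆ B`. Finally, for
`X ⊆ B` and `i ∉ B`, flatness of `B` gives `0 < Δ_B(i) ≤ Δ_X(i)`, so `cl(X) ⊆ B`.
-/

section

variable [DecidableEq α] {ρ : Finset α → ℝ}

namespace IsPolymatroid

theorem mono (hρ : IsPolymatroid ρ) {X Y : Finset α} (hXY : X ⊆ Y) : ρ X ≤ ρ Y :=
  hρ.2.1 X Y hXY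

theorem marginal_antitone (hρ : IsPolymatroid ρ) (i : α) {X Y : Finset α} (hXY : X ⊆ Y) :
    ρ (insert i Y) - ρ Y ≤ ρ (insert i X) - ρ X := by
  have hsub := hρ.2.2 Y (insert i X)
  have hunion : Y ∪ insert i X = insert i Y := by
    rw [union_insert, union_eq_left.mpr hXY]
  have hinter : ρ X ≤ ρ (Y ∩ insert i X) :=
    hρ.mono (subset_inter hXY (subset_insert i X))
  rw [hunion] at hsub
  linarith

theorem insert_le (hρ : IsPolymatroid ρ) (i : α) (X : Finset α) :
    ρ (insert i X) ≤ ρ X + ρ {i} := by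
  have h := hρ.marginal_antitone i (empty_subset X)
  rw [insert_empty, hρ.1] at h
  linarith

theorem union_le_add_sum (hρ : IsPolymatroid ρ) (X S : Finset α) :
    ρ (X ∪ S) ≤ ρ X + ∑ i ∈ S, ρ {i} := by
  induction S using Finset.induction_on with
  | empty => simp
  | insert i S hi ih =>
    rw [union_insert, sum_insert hi]
    linarith [hρ.insert_le i (X ∪ S)]

theorem union_eq_add_sum_of_subset (hρ : IsPolymatroid ρ) {X S T : Finset α} (hTS : T ⊆ S)
    (h : ρ (X ∪ S) = ρ X + ∑ i ∈ S, ρ {i}) : ρ (X ∪ T) = ρ X + ∑ i ∈ T, ρ {i} := by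
  have hS : ρ (X ∪ S) ≤ ρ (X ∪ T) + ∑ i ∈ S \ T, ρ {i} := by
    have := hρ.union_le_add_sum (X ∪ T) (S \ T)
    rwa [union_assoc, union_sdiff_of_subset hTS] at this
  have hsplit := sum_sdiff (f := fun i => ρ {i}) hTS
  linarith [hρ.union_le_add_sum X T]

end IsPolymatroid

theorem PmFlat.marginal_pos_of_subset (hρ : IsPolymatroid ρ) {B : Finset α} (hB : PmFlat ρ B)
    {X : Finset α} (hXB : X ⊆ B) {i : α} (hi : i ∉ B) : 0 < ρ (insert i X) - ρ X :=
  (sub_pos.mpr (hB i hi)).trans_le (hρ.marginal_antitone i hXB)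

theorem PmFlat.pmCl_subset [Fintype α] (hρ : IsPolymatroid ρ) {B X : Finset α} (hB : PmFlat ρ B)
    (hXB : X ⊆ B) : pmCl ρ X ⊆ B := by
  intro i hi
  by_contra hiB
  have hcl : ρ (insert i X) = ρ X := (mem_filter.mp hi).2
  linarith [hB.marginal_pos_of_subset hρ hXB hiB]

theorem subset_pmCl_of_union_eq [Fintype α] (hρ : IsPolymatroid ρ) {A B : Finset α}
    (h : ρ (B ∪ A) = ρ A) : B ⊆ pmCl ρ A := by
  intro i hiB
  refine mem_filter.mpr ⟨mem_univ i, le_antisymm ?_ (hρ.mono (subset_insert i A))⟩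
  calc ρ (insert i A)
      ≤ ρ (B ∪ A) := hρ.mono (insert_subset (mem_union_left A hiB) subset_union_right)
    _ = ρ A := h

theorem subset_pmCy {A D : Finset α} (hDA : D ⊆ A) (hD : PmCyclic ρ D) : D ⊆ pmCy ρ A :=
  Finset.le_sup (f := id) (mem_filter.mpr ⟨mem_powerset.mpr hDA, hD⟩)

theorem pmCy_subset {A B : Finset α} (h : ∀ D ⊆ A, PmCyclic ρ D → D ⊆ B) : pmCy ρ A ⊆ B :=
  Finset.sup_le fun D hD => h D (mem_powerset.mp (mem_filter.mp hD).1) (mem_filter.mp hD).2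

theorem PmCyclic.subset_of_flat (hρ : IsPolymatroid ρ) {B D : Finset α} (hB : PmFlat ρ B)
    (hD : PmCyclic ρ D) (hmod : ρ (B ∪ D) = ρ B + ∑ i ∈ D \ B, ρ {i}) : D ⊆ B := by
  intro i hiD
  by_contra hiB
  have hi : i ∈ D \ B := mem_sdiff.mpr ⟨hiD, hiB⟩
  set T := (D \ B).erase i
  have hpos : 0 < ρ {i} := by
    simpa [hρ.1] using hB.marginal_pos_of_subset hρ (empty_subset B) hiB
  have hcyc := hD i hiD hpos
  have hfull : ρ (insert i (B ∪ T)) = ρ B + ∑ j ∈ D \ B, ρ {j} := by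
    rwa [← union_insert, insert_erase hi, union_sdiff_self_eq_union]
  have hpart : ρ (B ∪ T) = ρ B + ∑ j ∈ T, ρ {j} := by
    refine hρ.union_eq_add_sum_of_subset (erase_subset i _) ?_
    rwa [union_sdiff_self_eq_union]
  have hsplit := add_sum_erase (D \ B) (fun j => ρ {j}) hi
  have hsmaller : D.erase i ⊆ B ∪ T := by
    intro x hx
    obtain ⟨hxi, hxD⟩ := mem_erase.mp hx
    by_cases hxB : x ∈ B
    · exact mem_union_left T hxB
    · exact mem_union_right B (mem_erase.mpr ⟨hxi, mem_sdiff.mpr ⟨hxD, hxB⟩⟩)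
  have hanti := hρ.marginal_antitone i hsmaller
  rw [insert_erase hiD] at hanti
  linarith

end

theorem mem_R_between [DecidableEq α] [Fintype α]
    (ρ : Finset α → ℝ) (hρ : IsPolymatroid ρ) (A : Finset α) {B : Finset α}
    (hBflat : PmFlat ρ B) (hBcyc : PmCyclic ρ B)
    (hBeq : ρ A = ρ B + ∑ i ∈ A \ B, ρ {i}) :
    pmCl ρ (pmCy ρ A) ⊆ B ∧ B ⊆ pmCy ρ (pmCl ρ A) := by
  have hBA : ρ (B ∪ A) = ρ A := by
    have hle := hρ.union_le_add_sum B (A \ B)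
    rw [union_sdiff_self_eq_union] at hle
    linarith [hρ.mono (subset_union_right : A ⊆ B ∪ A)]
  have hmod : ρ (B ∪ (A \ B)) = ρ B + ∑ i ∈ A \ B, ρ {i} := by
    rw [union_sdiff_self_eq_union, hBA, hBeq]
  have hcy : pmCy ρ A ⊆ B := pmCy_subset fun D hDA hD => by
    refine hD.subset_of_flat hρ hBflat ?_
    rw [← union_sdiff_self_eq_union]
    exact hρ.union_eq_add_sum_of_subset (sdiff_subset_sdiff hDA subset_rfl) hmod
  exact ⟨hBflat.pmCl_subset hρ hcy, subset_pmCy (subset_pmCl_of_union_eq hρ hBA) hBcyc⟩
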